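/- arXiv:1308.5391 — 3 statements merged into one kernel-verified Lean document; each statement's English description precedes it below -/
import Mathlib

section
/- Let Λ ⊆ ℝ^d be a bounded measurable set, v ∈ H^s(Λ), and let t ≥ 1 + C₀ θ ‖g₁‖_∞. Define the truncation v^t = min(t, max(v, −t)) and Λ_t = {y ∈ Λ : |v(y)| > t}. Then K₁(v, Λ) − K₁(v^t, Λ) ≥ ∫_{Λ_t} ( C₀^{-1}(t − 1) − θ‖g₁‖_∞ ) (|v(y)| − t) dy. -/
open MeasureTheory Set Filter Topology
open scoped ENNReal Topology NNReal

noncomputable section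

abbrev Rd (d : ℕ) : Type := EuclideanSpace ℝ (Fin d)

/-- The Gagliardo double integral of `v` over `Λ × Λ`. -/
def gag (d : ℕ) (s : ℝ) (v : Rd d → ℝ) (Λ : Set (Rd d)) : ℝ≥0∞ :=
  ∫⁻ x in Λ, ∫⁻ y in Λ, ENNReal.ofReal ((v x - v y) ^ 2 / ‖x - y‖ ^ ((d : ℝ) + 2 * s))

/-- The interaction `𝒲((v,Λ),(u,Λ₁))`. -/
def interW (d : ℕ) (s : ℝ) (v : Rd d → ℝ) (Λ : Set (Rd d)) (u : Rd d → ℝ)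
    (Λ₁ : Set (Rd d)) : ℝ≥0∞ :=
  2 * ∫⁻ x in Λ, ∫⁻ y in Λ₁, ENNReal.ofReal ((v x - u y) ^ 2 / ‖x - y‖ ^ ((d : ℝ) + 2 * s))

/-- `𝒲(v,Λ) = 𝒲((v,Λ),(v,ℝ^d∖Λ))`. -/
def bigW (d : ℕ) (s : ℝ) (v : Rd d → ℝ) (Λ : Set (Rd d)) : ℝ≥0∞ :=
  interW d s v Λ v Λᶜ

/-- The local free energy `K₁(v,Λ)`, with values in the extended reals. -/
def K1e (d : ℕ) (s : ℝ) (W : ℝ → ℝ) (θ : ℝ) (g₁ : Rd d → ℝ) (v : Rd d → ℝ)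
    (Λ : Set (Rd d)) : EReal :=
  (gag d s v Λ : EReal) + (((∫ x in Λ, W (v x)) : ℝ) : EReal)
    - (((θ * ∫ x in Λ, g₁ x * v x) : ℝ) : EReal)

/-- `G₁(v,Λ) = K₁(v,Λ) + 𝒲(v,Λ)`, with values in the extended reals. -/
def G1e (d : ℕ) (s : ℝ) (W : ℝ → ℝ) (θ : ℝ) (g₁ : Rd d → ℝ) (v : Rd d → ℝ)
    (Λ : Set (Rd d)) : EReal :=
  K1e d s W θ g₁ v Λ + (bigW d s v Λ : EReal)

/-- `G₁^{v₀}(v,Λ) = K₁(v,Λ) + 𝒲((v,Λ),(v₀,ℝ^d∖Λ))`, with values in the extended reals. -/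
def G1bce (d : ℕ) (s : ℝ) (W : ℝ → ℝ) (θ : ℝ) (g₁ : Rd d → ℝ) (v₀ : Rd d → ℝ)
    (v : Rd d → ℝ) (Λ : Set (Rd d)) : EReal :=
  K1e d s W θ g₁ v Λ + (interW d s v Λ v₀ Λᶜ : EReal)

/-- Real-valued version of `K₁`. -/
def K1r (d : ℕ) (s : ℝ) (W : ℝ → ℝ) (θ : ℝ) (g₁ : Rd d → ℝ) (v : Rd d → ℝ)
    (Λ : Set (Rd d)) : ℝ :=
  (gag d s v Λ).toReal + (∫ x in Λ, W (v x)) - θ * ∫ x in Λ, g₁ x * v x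

/-- Real-valued version of `G₁`. -/
def G1r (d : ℕ) (s : ℝ) (W : ℝ → ℝ) (θ : ℝ) (g₁ : Rd d → ℝ) (v : Rd d → ℝ)
    (Λ : Set (Rd d)) : ℝ :=
  K1r d s W θ g₁ v Λ + (bigW d s v Λ).toReal

/-- Real-valued version of `G₁^{v₀}`. -/
def G1bcr (d : ℕ) (s : ℝ) (W : ℝ → ℝ) (θ : ℝ) (g₁ : Rd d → ℝ) (v₀ : Rd d → ℝ)
    (v : Rd d → ℝ) (Λ : Set (Rd d)) : ℝ :=
  K1r d s W θ g₁ v Λ + (interW d s v Λ v₀ Λᶜ).toReal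

/-- The axis-parallel open cube with lower-left corner `c` and side length `L`. -/
def cube (d : ℕ) (c : Rd d) (L : ℝ) : Set (Rd d) :=
  {x | ∀ i, x i ∈ Set.Ioo (c i) (c i + L)}

/-- Membership in the fractional Sobolev space `H^s(Λ)`. -/
def memHs (d : ℕ) (s : ℝ) (v : Rd d → ℝ) (Λ : Set (Rd d)) : Prop :=
  MemLp v 2 (volume.restrict Λ) ∧ gag d s v Λ < ⊤

/-- Membership in `H^s_loc(ℝ^d)`: membership in `H^s(B)` for every ball `B`. -/
def memHsLoc (d : ℕ) (s : ℝ) (v : Rd d → ℝ) : Prop :=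
  ∀ (x : Rd d) (R : ℝ), memHs d s v (Metric.ball x R)

/-- Assumption (H1) on the double well potential `W`. -/
def H1 (W : ℝ → ℝ) (C₀ δ₀ : ℝ) : Prop :=
  ContDiff ℝ 2 W ∧ (∀ t, 0 ≤ W t) ∧ (∀ t, W t = 0 ↔ t = -1 ∨ t = 1) ∧
  (∀ t, W (-t) = W t) ∧ StrictAntiOn W (Set.Icc 0 1) ∧
  0 < δ₀ ∧ 0 < C₀ ∧ ∀ t : ℝ, 1 - δ₀ < t → W t = 1 / (2 * C₀) * (t - 1) ^ 2

/-- `v` is `α`-Hölder continuous with constant `H` on the set `A`. -/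
def HolderOn (d : ℕ) (α H : ℝ) (v : Rd d → ℝ) (A : Set (Rd d)) : Prop :=
  ∀ x ∈ A, ∀ y ∈ A, |v x - v y| ≤ H * ‖x - y‖ ^ α

/-- `v ∈ C^{0,α}_loc(ℝ^d)`. -/
def HolderLoc (d : ℕ) (α : ℝ) (v : Rd d → ℝ) : Prop :=
  ∀ K : Set (Rd d), IsCompact K → ∃ H : ℝ, HolderOn d α H v K

/-- `v ∈ C^{1,α}_loc(ℝ^d)`. -/
def C1HolderLoc (d : ℕ) (α : ℝ) (v : Rd d → ℝ) : Prop :=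
  ContDiff ℝ 1 v ∧ ∀ K : Set (Rd d), IsCompact K → ∃ H : ℝ,
    ∀ x ∈ K, ∀ y ∈ K, ‖fderiv ℝ v x - fderiv ℝ v y‖ ≤ H * ‖x - y‖ ^ α

/-- `u` is a `v₀`-minimizer of `G₁` in `Λ` (for the field `g₁`). -/
def IsBCMin (d : ℕ) (s : ℝ) (W : ℝ → ℝ) (θ : ℝ) (g₁ v₀ u : Rd d → ℝ)
    (Λ : Set (Rd d)) : Prop :=
  Measurable u ∧ Set.EqOn u v₀ Λᶜ ∧ G1bce d s W θ g₁ v₀ u Λ ≠ ⊤ ∧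
  ∀ w : Rd d → ℝ, Measurable w → Set.EqOn w v₀ Λᶜ →
    G1bce d s W θ g₁ v₀ u Λ ≤ G1bce d s W θ g₁ v₀ w Λ

/-- `u` is a minimizer of `G₁` under compact perturbations. -/
def IsMinCP (d : ℕ) (s : ℝ) (W : ℝ → ℝ) (θ : ℝ) (g₁ : Rd d → ℝ) (u : Rd d → ℝ) : Prop :=
  Measurable u ∧ memHsLoc d s u ∧ (∃ M : ℝ, ∀ x, |u x| ≤ M) ∧
  ∀ U : Set (Rd d), IsOpen U → Bornology.IsBounded U →
    G1e d s W θ g₁ u U ≠ ⊤ ∧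
    ∀ w : Rd d → ℝ, Measurable w → Set.EqOn w u Uᶜ →
      G1e d s W θ g₁ u U ≤ G1e d s W θ g₁ w U

/-- The lattice point `y ∈ ℤ^d` as a point of `ℝ^d`. -/
def latE (d : ℕ) (y : Fin d → ℤ) : Rd d :=
  (EuclideanSpace.equiv (Fin d) ℝ).symm (fun i => (y i : ℝ))

/-- The random field `g₁(x,ω) = Σ_z ω(z) 1_{z+[-1/2,1/2)^d}(x)`. -/
def fieldOf (d : ℕ) (ω : (Fin d → ℤ) → ℝ) (x : Rd d) : ℝ :=
  ω (fun i => ⌊x i + 1/2⌋)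

/-- The cube `Λ_n = (-n/2, n/2)^d`. -/
def cubeN (d : ℕ) (n : ℕ) : Set (Rd d) :=
  {x | ∀ i, x i ∈ Set.Ioo (-(n / 2) : ℝ) ((n : ℝ) / 2)}

/-- The cube `Q(0) = [-1/2,1/2]^d`. -/
def Q0 (d : ℕ) : Set (Rd d) :=
  {x | ∀ i, x i ∈ Set.Icc (-(1/2) : ℝ) (1/2)}

/-- `‖f‖_{C^{0,α}(D)} ≤ N` : sup norm plus Hölder seminorm bounded by `N`. -/
def holderNormLE (d : ℕ) (α : ℝ) (D : Set (Rd d)) (f : Rd d → ℝ) (N : ℝ) : Prop :=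
  ∃ a b : ℝ, 0 ≤ a ∧ 0 ≤ b ∧ a + b ≤ N ∧ (∀ x ∈ D, |f x| ≤ a) ∧
    ∀ x ∈ D, ∀ y ∈ D, |f x - f y| ≤ b * ‖x - y‖ ^ α


/-- Truncation is 1-Lipschitz. -/
lemma trunc_lip (t a b : ℝ) : |min t (max a (-t)) - min t (max b (-t))| ≤ |a - b| := by
  refine le_trans (abs_min_sub_min_le_max _ _ _ _) ?_
  simp only [sub_self, abs_zero]
  rw [max_eq_right (abs_nonneg _)]
  exact abs_max_sub_max_le_abs a b (-t)

/-- The Gagliardo energy decreases under truncation. -/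
lemma gag_trunc_le (d : ℕ) (s : ℝ) (v : Rd d → ℝ) (Λ : Set (Rd d)) (t : ℝ) :
    gag d s (fun x => min t (max (v x) (-t))) Λ ≤ gag d s v Λ := by
  unfold gag
  refine lintegral_mono fun x => lintegral_mono fun y => ?_
  apply ENNReal.ofReal_le_ofReal
  have hnum : (min t (max (v x) (-t)) - min t (max (v y) (-t))) ^ 2 ≤ (v x - v y) ^ 2 := by
    calc (min t (max (v x) (-t)) - min t (max (v y) (-t))) ^ 2
        = |min t (max (v x) (-t)) - min t (max (v y) (-t))| ^ 2 := (sq_abs _).symm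
      _ ≤ |v x - v y| ^ 2 := pow_le_pow_left₀ (abs_nonneg _) (trunc_lip t (v x) (v y)) 2
      _ = (v x - v y) ^ 2 := sq_abs _
  rcases eq_or_lt_of_le (Real.rpow_nonneg (norm_nonneg (x - y)) ((d : ℝ) + 2 * s)) with h | h
  · rw [← h]; simp
  · exact (div_le_div_iff_of_pos_right h).2 hnum

/-- Key pointwise inequality for the truncation argument. -/
lemma trunc_key {W : ℝ → ℝ} {C₀ δ₀ : ℝ} (hW : H1 W C₀ δ₀) {θ Mg t g a : ℝ}
    (hθ : 0 ≤ θ) (hMg : 0 ≤ Mg) (ht : 1 + C₀ * θ * Mg ≤ t) (hg : |g| ≤ Mg) :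
    0 ≤ W a - W (min t (max a (-t))) - θ * (g * (a - min t (max a (-t)))) ∧
    (C₀⁻¹ * (t - 1) - θ * Mg) * (|a| - t) ≤
      W a - W (min t (max a (-t))) - θ * (g * (a - min t (max a (-t)))) := by
  have hC : 0 < C₀ := hW.2.2.2.2.2.2.1
  have hδ : 0 < δ₀ := hW.2.2.2.2.2.1
  have hquad : ∀ r : ℝ, 1 - δ₀ < r → W r = 1 / (2 * C₀) * (r - 1) ^ 2 := hW.2.2.2.2.2.2.2
  have heven : ∀ r : ℝ, W (-r) = W r := hW.2.2.2.1
  have ht1 : (1 : ℝ) ≤ t := le_trans (by nlinarith [mul_nonneg (mul_nonneg hC.le hθ) hMg]) ht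
  have hw : (0 : ℝ) < 1 / (2 * C₀) := by positivity
  have hinv : C₀⁻¹ = 2 * (1 / (2 * C₀)) := by field_simp
  have hc : 0 ≤ C₀⁻¹ * (t - 1) - θ * Mg := by
    have h1 : C₀⁻¹ * C₀ = 1 := inv_mul_cancel₀ hC.ne'
    nlinarith [inv_pos.2 hC, mul_nonneg hθ hMg]
  have hg1 : -Mg ≤ g := (abs_le.1 hg).1
  have hg2 : g ≤ Mg := (abs_le.1 hg).2
  rcases le_or_gt a t with hat | hat
  · rcases le_or_gt (-t) a with hta | hta
    · -- |a| ≤ t : truncation does nothing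
      have htr : min t (max a (-t)) = a := by rw [max_eq_left hta, min_eq_right hat]
      rw [htr]
      have habs : |a| ≤ t := abs_le.2 ⟨hta, hat⟩
      constructor
      · simp
      · simp only [sub_self, mul_zero, sub_zero]
        nlinarith [mul_nonneg hc (sub_nonneg.2 habs)]
    · -- a < -t
      have htr : min t (max a (-t)) = -t := by
        rw [max_eq_right hta.le, min_eq_right (by linarith)]
      rw [htr]
      have habs : |a| = -a := abs_of_neg (by linarith)
      have hWa : W a = 1 / (2 * C₀) * (-a - 1) ^ 2 := by
        rw [← heven a]; exact hquad (-a) (by linarith)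
      have hWt : W (-t) = 1 / (2 * C₀) * (t - 1) ^ 2 := by
        rw [heven t]; exact hquad t (by linarith)
      rw [hWa, hWt, habs]
      have h2 : (C₀⁻¹ * (t - 1) - θ * Mg) * (-a - t) ≤
          1 / (2 * C₀) * (-a - 1) ^ 2 - 1 / (2 * C₀) * (t - 1) ^ 2 - θ * (g * (a - -t)) := by
        nlinarith [mul_nonneg hw.le (sq_nonneg (a + t)),
          mul_nonneg (mul_nonneg hθ (by linarith : (0:ℝ) ≤ g + Mg)) (by linarith : (0:ℝ) ≤ -a - t)]
      exact ⟨le_trans (mul_nonneg hc (by linarith)) h2, h2⟩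
  · -- t < a
    have htr : min t (max a (-t)) = t := by
      rw [max_eq_left (by linarith), min_eq_left hat.le]
    rw [htr]
    have habs : |a| = a := abs_of_nonneg (by linarith)
    have hWa : W a = 1 / (2 * C₀) * (a - 1) ^ 2 := hquad a (by linarith)
    have hWt : W t = 1 / (2 * C₀) * (t - 1) ^ 2 := hquad t (by linarith)
    rw [hWa, hWt, habs]
    have h2 : (C₀⁻¹ * (t - 1) - θ * Mg) * (a - t) ≤
        1 / (2 * C₀) * (a - 1) ^ 2 - 1 / (2 * C₀) * (t - 1) ^ 2 - θ * (g * (a - t)) := by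
      nlinarith [mul_nonneg hw.le (sq_nonneg (a - t)),
        mul_nonneg (mul_nonneg hθ (by linarith : (0:ℝ) ≤ Mg - g)) (by linarith : (0:ℝ) ≤ a - t)]
    exact ⟨le_trans (mul_nonneg hc (by linarith)) h2, h2⟩

/-- energy decrease under truncation, for `K₁`. -/
theorem statement1 (d : ℕ) (hd : 1 ≤ d) (s : ℝ) (hs : 0 < s ∧ s < 1)
    (W : ℝ → ℝ) (C₀ δ₀ : ℝ) (hW : H1 W C₀ δ₀)
    (θ : ℝ) (hθ : 0 ≤ θ)
    (g₁ : Rd d → ℝ) (hg : Measurable g₁) (Mg : ℝ) (hMg : 0 ≤ Mg)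
    (hgb : ∀ x, |g₁ x| ≤ Mg)
    (Λ : Set (Rd d)) (hΛm : MeasurableSet Λ) (hΛb : Bornology.IsBounded Λ)
    (v : Rd d → ℝ) (hv : Measurable v) (hvHs : memHs d s v Λ)
    (t : ℝ) (ht : 1 + C₀ * θ * Mg ≤ t) :
    ∫ y in {y ∈ Λ | t < |v y|}, (C₀⁻¹ * (t - 1) - θ * Mg) * (|v y| - t) ≤
      K1r d s W θ g₁ v Λ - K1r d s W θ g₁ (fun x => min t (max (v x) (-t))) Λ := by
  have hC : 0 < C₀ := hW.2.2.2.2.2.2.1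
  have hWpos : ∀ r, 0 ≤ W r := hW.2.1
  set vt : Rd d → ℝ := fun x => min t (max (v x) (-t)) with hvtdef
  have hvtM : Measurable vt := measurable_const.min (hv.max measurable_const)
  have ht1 : (1 : ℝ) ≤ t :=
    le_trans (by nlinarith [mul_nonneg (mul_nonneg hC.le hθ) hMg]) ht
  have hvtb : ∀ x, -t ≤ vt x ∧ vt x ≤ t := fun x =>
    ⟨le_min (by linarith) (le_max_right _ _), min_le_left _ _⟩
  -- finite measure
  have hvol : volume Λ < ⊤ := hΛb.measure_lt_top
  haveI : IsFiniteMeasure (volume.restrict Λ) := ⟨by rwa [Measure.restrict_apply_univ]⟩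
  -- continuity / bounds of W
  have hWc : Continuous W := hW.1.continuous
  obtain ⟨M₁, hM₁⟩ : ∃ M₁, ∀ r ∈ Icc (-2 : ℝ) 2, W r ≤ M₁ := by
    obtain ⟨z, _, hz⟩ := isCompact_Icc.exists_isMaxOn (nonempty_Icc.2 (by norm_num : (-2:ℝ) ≤ 2))
      hWc.continuousOn
    exact ⟨W z, fun r hr => hz hr⟩
  have hM₁0 : 0 ≤ M₁ := le_trans (hWpos 2) (hM₁ 2 ⟨by norm_num, le_refl _⟩)
  have hδ : 0 < δ₀ := hW.2.2.2.2.2.1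
  have hquad : ∀ r : ℝ, 1 - δ₀ < r → W r = 1 / (2 * C₀) * (r - 1) ^ 2 := hW.2.2.2.2.2.2.2
  have heven : ∀ r : ℝ, W (-r) = W r := hW.2.2.2.1
  have hWbound : ∀ r : ℝ, W r ≤ M₁ + 1 / (2 * C₀) * r ^ 2 := by
    intro r
    have hw : (0 : ℝ) < 1 / (2 * C₀) := by positivity
    rcases le_or_gt (|r|) 2 with h2 | h2
    · have := hM₁ r (abs_le.1 h2)
      nlinarith [sq_nonneg r]
    · have hq : W r = 1 / (2 * C₀) * (|r| - 1) ^ 2 := by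
        rcases le_or_gt 0 r with hr | hr
        · rw [abs_of_nonneg hr]; exact hquad r (by rw [abs_of_nonneg hr] at h2; linarith)
        · rw [abs_of_neg hr, ← heven r]
          exact hquad (-r) (by rw [abs_of_neg hr] at h2; linarith)
      have habs : (1:ℝ) ≤ |r| := by linarith
      nlinarith [sq_abs r, abs_nonneg r]
  -- integrability facts
  have hv2 : Integrable (fun x => v x ^ 2) (volume.restrict Λ) := hvHs.1.integrable_sq
  have hv1 : Integrable v (volume.restrict Λ) := hvHs.1.integrable one_le_two
  have hWv : Integrable (fun x => W (v x)) (volume.restrict Λ) := by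
    refine Integrable.mono' ((integrable_const M₁).add (hv2.const_mul (1 / (2 * C₀))))
      ((hWc.measurable.comp hv).aestronglyMeasurable) ?_
    filter_upwards with x
    rw [Real.norm_eq_abs, abs_of_nonneg (hWpos _)]
    exact hWbound _
  have hWvt : Integrable (fun x => W (vt x)) (volume.restrict Λ) := by
    obtain ⟨M₂, hM₂⟩ : ∃ M₂, ∀ r ∈ Icc (-t) t, W r ≤ M₂ := by
      obtain ⟨z, _, hz⟩ := isCompact_Icc.exists_isMaxOn
        (nonempty_Icc.2 (by linarith : -t ≤ t)) hWc.continuousOn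
      exact ⟨W z, fun r hr => hz hr⟩
    refine Integrable.mono' (integrable_const M₂)
      ((hWc.measurable.comp hvtM).aestronglyMeasurable) ?_
    filter_upwards with x
    rw [Real.norm_eq_abs, abs_of_nonneg (hWpos _)]
    exact hM₂ _ ⟨(hvtb x).1, (hvtb x).2⟩
  have hgv : Integrable (fun x => g₁ x * v x) (volume.restrict Λ) := by
    refine Integrable.mono' (hv1.abs.const_mul Mg) ((hg.mul hv).aestronglyMeasurable) ?_
    filter_upwards with x
    rw [Real.norm_eq_abs, abs_mul]
    exact mul_le_mul_of_nonneg_right (hgb x) (abs_nonneg _)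
  have hgvt : Integrable (fun x => g₁ x * vt x) (volume.restrict Λ) := by
    refine Integrable.mono' (integrable_const (Mg * t)) ((hg.mul hvtM).aestronglyMeasurable) ?_
    filter_upwards with x
    rw [Real.norm_eq_abs, abs_mul]
    exact mul_le_mul (hgb x) (abs_le.2 ⟨(hvtb x).1, (hvtb x).2⟩) (abs_nonneg _) hMg
  -- the comparison function
  set f : Rd d → ℝ := fun x => W (v x) - W (vt x) - θ * (g₁ x * (v x - vt x)) with hfdef
  have hpt : ∀ x, 0 ≤ f x ∧ (C₀⁻¹ * (t - 1) - θ * Mg) * (|v x| - t) ≤ f x := fun x =>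
    trunc_key hW hθ hMg ht (hgb x)
  have hfi : Integrable f (volume.restrict Λ) := by
    have hsub1 : Integrable (fun x => g₁ x * v x - g₁ x * vt x) (volume.restrict Λ) :=
      hgv.sub hgvt
    have hsub3 : Integrable (fun x => W (v x) - W (vt x) - θ * (g₁ x * v x - g₁ x * vt x))
        (volume.restrict Λ) := (hWv.sub hWvt).sub (hsub1.const_mul θ)
    refine hsub3.congr ?_
    filter_upwards with x
    simp only [hfdef]; ring
  -- the exceptional set
  set S : Set (Rd d) := {y ∈ Λ | t < |v y|} with hSdef
  have hSsub : S ⊆ Λ := fun x hx => hx.1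
  have hSm : MeasurableSet S := hΛm.inter (measurableSet_lt measurable_const hv.abs)
  have hlin : Integrable (fun y => (C₀⁻¹ * (t - 1) - θ * Mg) * (|v y| - t))
      (volume.restrict Λ) := (hv1.abs.sub (integrable_const t)).const_mul _
  have step1 : ∫ y in S, (C₀⁻¹ * (t - 1) - θ * Mg) * (|v y| - t) ≤ ∫ y in S, f y :=
    setIntegral_mono_on (hlin.mono_measure (Measure.restrict_mono hSsub le_rfl)) (hfi.mono_measure (Measure.restrict_mono hSsub le_rfl)) hSm
      (fun x _ => (hpt x).2)
  have step2 : ∫ y in S, f y ≤ ∫ y in Λ, f y :=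
    setIntegral_mono_set hfi (Eventually.of_forall fun x => (hpt x).1)
      (HasSubset.Subset.eventuallyLE hSsub)
  have step3 : ∫ x in Λ, f x = (∫ x in Λ, W (v x)) - (∫ x in Λ, W (vt x)) -
      θ * ((∫ x in Λ, g₁ x * v x) - ∫ x in Λ, g₁ x * vt x) := by
    calc ∫ x in Λ, f x
        = ∫ x in Λ, (W (v x) - W (vt x) - θ * (g₁ x * v x - g₁ x * vt x)) := by
          refine integral_congr_ae (Eventually.of_forall fun x => ?_)
          simp only [hfdef]; ring
      _ = (∫ x in Λ, W (v x)) - (∫ x in Λ, W (vt x)) -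
          θ * ((∫ x in Λ, g₁ x * v x) - ∫ x in Λ, g₁ x * vt x) := by
          have hsub1 : Integrable (fun x => g₁ x * v x - g₁ x * vt x) (volume.restrict Λ) :=
            hgv.sub hgvt
          have hsub3 : Integrable (fun x => W (v x) - W (vt x)) (volume.restrict Λ) :=
            hWv.sub hWvt
          rw [integral_sub hsub3 (hsub1.const_mul θ),
            integral_sub hWv hWvt, integral_const_mul, integral_sub hgv hgvt]
  -- Gagliardo part
  have hgagle : gag d s vt Λ ≤ gag d s v Λ := gag_trunc_le d s v Λ t
  have hgagr : (gag d s vt Λ).toReal ≤ (gag d s v Λ).toReal :=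
    ENNReal.toReal_mono hvHs.2.ne hgagle
  -- conclude
  simp only [K1r]
  have := step1.trans (step2.trans_eq step3)
  linarith

end
end

section
/- Let u, v ∈ H^s_loc(ℝ^d) ∩ L^∞(ℝ^d) and let Λ ⊆ ℝ^d be a bounded measurable set. Then, writing u∨v and u∧v for the pointwise maximum and minimum, G₁(u∨v, Λ) + G₁(u∧v, Λ) ≤ G₁(u, Λ) + G₁(v, Λ). -/
open MeasureTheory Set Filter Topology
open scoped ENNReal Topology NNReal

noncomputable section

/-- Auxiliary: the double integral over `A × B` with the fractional kernel. -/
def dint (d : ℕ) (s : ℝ) (f g : Rd d → ℝ) (A B : Set (Rd d)) : ℝ≥0∞ :=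
  ∫⁻ x in A, ∫⁻ y in B, ENNReal.ofReal ((f x - g y) ^ 2 / ‖x - y‖ ^ ((d : ℝ) + 2 * s))

lemma meas_ker (d : ℕ) (s : ℝ) (hds : (0:ℝ) ≤ (d : ℝ) + 2 * s) {f g : Rd d → ℝ}
    (hf : Measurable f) (hg : Measurable g) :
    Measurable (fun z : Rd d × Rd d =>
      ENNReal.ofReal ((f z.1 - g z.2) ^ 2 / ‖z.1 - z.2‖ ^ ((d : ℝ) + 2 * s))) := by
  apply ENNReal.measurable_ofReal.comp
  apply Measurable.div
  · exact ((hf.comp measurable_fst).sub (hg.comp measurable_snd)).pow_const 2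
  · exact ((Real.continuous_rpow_const hds).comp
      ((continuous_fst.sub continuous_snd).norm)).measurable

lemma dint_eq_prod (d : ℕ) (s : ℝ) (hds : (0:ℝ) ≤ (d : ℝ) + 2 * s) {f g : Rd d → ℝ}
    (hf : Measurable f) (hg : Measurable g) (A B : Set (Rd d)) :
    dint d s f g A B = ∫⁻ z : Rd d × Rd d,
      ENNReal.ofReal ((f z.1 - g z.2) ^ 2 / ‖z.1 - z.2‖ ^ ((d : ℝ) + 2 * s))
        ∂((volume.restrict A).prod (volume.restrict B)) := by
  rw [MeasureTheory.lintegral_prod _ (meas_ker d s hds hf hg).aemeasurable]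
  rfl

lemma max_min_sq (a b c e : ℝ) :
    (max a c - max b e) ^ 2 + (min a c - min b e) ^ 2 ≤ (a - b) ^ 2 + (c - e) ^ 2 := by
  rcases le_total a c with h1 | h1 <;> rcases le_total b e with h2 | h2 <;>
    simp only [max_def, min_def] <;> split_ifs <;> nlinarith

lemma ofReal_div_add_le (p q r t k : ℝ) (hk : 0 ≤ k) (hp : 0 ≤ p) (hq : 0 ≤ q)
    (hr : 0 ≤ r) (ht : 0 ≤ t) (h : p + q ≤ r + t) :
    ENNReal.ofReal (p / k) + ENNReal.ofReal (q / k) ≤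
      ENNReal.ofReal (r / k) + ENNReal.ofReal (t / k) := by
  rw [← ENNReal.ofReal_add (div_nonneg hp hk) (div_nonneg hq hk),
      ← ENNReal.ofReal_add (div_nonneg hr hk) (div_nonneg ht hk)]
  apply ENNReal.ofReal_le_ofReal
  rw [← add_div, ← add_div]
  rcases hk.eq_or_lt with h0 | h0
  · simp [← h0]
  · exact (div_le_div_iff_of_pos_right h0).mpr h

lemma dint_pair (d : ℕ) (s : ℝ) (hds : (0:ℝ) ≤ (d : ℝ) + 2 * s) {u v : Rd d → ℝ}
    (hu : Measurable u) (hv : Measurable v) (A B : Set (Rd d)) :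
    dint d s (fun x => max (u x) (v x)) (fun x => max (u x) (v x)) A B +
      dint d s (fun x => min (u x) (v x)) (fun x => min (u x) (v x)) A B ≤
    dint d s u u A B + dint d s v v A B := by
  rw [dint_eq_prod d s hds (hu.max hv) (hu.max hv), dint_eq_prod d s hds (hu.min hv) (hu.min hv),
      dint_eq_prod d s hds hu hu, dint_eq_prod d s hds hv hv,
      ← lintegral_add_left (meas_ker d s hds (hu.max hv) (hu.max hv)),
      ← lintegral_add_left (meas_ker d s hds hu hu)]
  apply lintegral_mono
  intro z
  exact ofReal_div_add_le _ _ _ _ _ (Real.rpow_nonneg (norm_nonneg _) _)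
    (sq_nonneg _) (sq_nonneg _) (sq_nonneg _) (sq_nonneg _)
    (max_min_sq (u z.1) (u z.2) (v z.1) (v z.2))

lemma coeE {A : ℝ≥0∞} (h : A ≠ ⊤) : (A : EReal) = ((A.toReal : ℝ) : EReal) := by
  rw [← EReal.toReal_coe_ennreal]
  exact (EReal.coe_toReal (by simp [EReal.coe_ennreal_eq_top_iff, h])
    (EReal.coe_ennreal_ne_bot _)).symm

lemma K1e_ne_bot (d : ℕ) (s : ℝ) (W : ℝ → ℝ) (θ : ℝ) (g₁ w : Rd d → ℝ) (Λ : Set (Rd d)) :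
    K1e d s W θ g₁ w Λ ≠ ⊥ := by
  unfold K1e
  rw [sub_eq_add_neg, ← EReal.coe_neg]
  simp [EReal.add_eq_bot_iff, EReal.coe_ennreal_ne_bot, EReal.coe_ne_top, ← EReal.coe_mul]

lemma G1e_ne_bot (d : ℕ) (s : ℝ) (W : ℝ → ℝ) (θ : ℝ) (g₁ w : Rd d → ℝ) (Λ : Set (Rd d)) :
    G1e d s W θ g₁ w Λ ≠ ⊥ := by
  unfold G1e
  simp [EReal.add_eq_bot_iff, EReal.coe_ennreal_ne_bot, K1e_ne_bot]

lemma G1e_eq_top (d : ℕ) (s : ℝ) (W : ℝ → ℝ) (θ : ℝ) (g₁ w : Rd d → ℝ) (Λ : Set (Rd d))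
    (h : gag d s w Λ = ⊤ ∨ bigW d s w Λ = ⊤) : G1e d s W θ g₁ w Λ = ⊤ := by
  rcases h with h | h
  · unfold G1e K1e
    rw [h, EReal.coe_ennreal_top, EReal.top_add_coe, EReal.top_sub_coe]
    exact EReal.top_add_of_ne_bot (EReal.coe_ennreal_ne_bot _)
  · unfold G1e
    rw [h, EReal.coe_ennreal_top]
    exact EReal.add_top_of_ne_bot (K1e_ne_bot d s W θ g₁ w Λ)

lemma G1e_eq_coe (d : ℕ) (s : ℝ) (W : ℝ → ℝ) (θ : ℝ) (g₁ w : Rd d → ℝ) (Λ : Set (Rd d))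
    (h1 : gag d s w Λ ≠ ⊤) (h2 : bigW d s w Λ ≠ ⊤) :
    G1e d s W θ g₁ w Λ = (((gag d s w Λ).toReal + (∫ x in Λ, W (w x))
      - θ * (∫ x in Λ, g₁ x * w x) + (bigW d s w Λ).toReal : ℝ) : EReal) := by
  unfold G1e K1e
  rw [coeE h1, coeE h2]
  norm_cast

/-- submodularity of `G₁` under pointwise max/min. -/
theorem statement5 (d : ℕ) (hd : 1 ≤ d) (s : ℝ) (hs : 0 < s ∧ s < 1)
    (W : ℝ → ℝ) (hWc : Continuous W) (hWpos : ∀ t, 0 ≤ W t)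
    (θ : ℝ) (hθ : 0 ≤ θ)
    (g₁ : Rd d → ℝ) (hg : Measurable g₁) (Mg : ℝ) (hgb : ∀ x, |g₁ x| ≤ Mg)
    (u v : Rd d → ℝ) (hu : Measurable u) (hv : Measurable v)
    (huHs : memHsLoc d s u) (hvHs : memHsLoc d s v)
    (Mu : ℝ) (hub : ∀ x, |u x| ≤ Mu) (Mv : ℝ) (hvb : ∀ x, |v x| ≤ Mv)
    (Λ : Set (Rd d)) (hΛm : MeasurableSet Λ) (hΛb : Bornology.IsBounded Λ) :
    G1e d s W θ g₁ (fun x => max (u x) (v x)) Λ +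
        G1e d s W θ g₁ (fun x => min (u x) (v x)) Λ ≤
      G1e d s W θ g₁ u Λ + G1e d s W θ g₁ v Λ := by
  classical
  -- abbreviations
  set M : Rd d → ℝ := fun x => max (u x) (v x) with hM
  set m : Rd d → ℝ := fun x => min (u x) (v x) with hm
  have hds : (0:ℝ) ≤ (d : ℝ) + 2 * s := by
    have h1 : (1:ℝ) ≤ (d : ℝ) := by exact_mod_cast hd
    linarith [hs.1]
  -- kernel inequalities
  have hgagle : gag d s M Λ + gag d s m Λ ≤ gag d s u Λ + gag d s v Λ :=
    dint_pair d s hds hu hv Λ Λ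
  have hbwle : bigW d s M Λ + bigW d s m Λ ≤ bigW d s u Λ + bigW d s v Λ := by
    show 2 * dint d s M M Λ Λᶜ + 2 * dint d s m m Λ Λᶜ ≤
      2 * dint d s u u Λ Λᶜ + 2 * dint d s v v Λ Λᶜ
    rw [← mul_add, ← mul_add]
    exact mul_le_mul_right (dint_pair d s hds hu hv Λ Λᶜ) 2
  by_cases htop : gag d s u Λ = ⊤ ∨ bigW d s u Λ = ⊤ ∨ gag d s v Λ = ⊤ ∨ bigW d s v Λ = ⊤
  · -- RHS is ⊤
    have hRHS : G1e d s W θ g₁ u Λ + G1e d s W θ g₁ v Λ = ⊤ := by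
      rcases htop with h | h | h | h
      · rw [G1e_eq_top d s W θ g₁ u Λ (Or.inl h)]
        exact EReal.top_add_of_ne_bot (G1e_ne_bot d s W θ g₁ v Λ)
      · rw [G1e_eq_top d s W θ g₁ u Λ (Or.inr h)]
        exact EReal.top_add_of_ne_bot (G1e_ne_bot d s W θ g₁ v Λ)
      · rw [G1e_eq_top d s W θ g₁ v Λ (Or.inl h)]
        exact EReal.add_top_of_ne_bot (G1e_ne_bot d s W θ g₁ u Λ)
      · rw [G1e_eq_top d s W θ g₁ v Λ (Or.inr h)]
        exact EReal.add_top_of_ne_bot (G1e_ne_bot d s W θ g₁ u Λ)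
    rw [hRHS]
    exact le_top
  push_neg at htop
  obtain ⟨hug, hubw, hvg, hvbw⟩ := htop
  -- finiteness transfer
  have hsum_g : gag d s u Λ + gag d s v Λ ≠ ⊤ := by simp [ENNReal.add_eq_top, hug, hvg]
  have hsum_bw : bigW d s u Λ + bigW d s v Λ ≠ ⊤ := by simp [ENNReal.add_eq_top, hubw, hvbw]
  have hMg : gag d s M Λ ≠ ⊤ :=
    ((le_self_add.trans hgagle).trans_lt (lt_top_iff_ne_top.mpr hsum_g)).ne
  have hmg : gag d s m Λ ≠ ⊤ :=
    ((le_add_self.trans hgagle).trans_lt (lt_top_iff_ne_top.mpr hsum_g)).ne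
  have hMbw : bigW d s M Λ ≠ ⊤ :=
    ((le_self_add.trans hbwle).trans_lt (lt_top_iff_ne_top.mpr hsum_bw)).ne
  have hmbw : bigW d s m Λ ≠ ⊤ :=
    ((le_add_self.trans hbwle).trans_lt (lt_top_iff_ne_top.mpr hsum_bw)).ne
  -- real-valued kernel inequalities
  have hgagle' : (gag d s M Λ).toReal + (gag d s m Λ).toReal ≤
      (gag d s u Λ).toReal + (gag d s v Λ).toReal := by
    rw [← ENNReal.toReal_add hMg hmg, ← ENNReal.toReal_add hug hvg]
    exact ENNReal.toReal_mono hsum_g hgagle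
  have hbwle' : (bigW d s M Λ).toReal + (bigW d s m Λ).toReal ≤
      (bigW d s u Λ).toReal + (bigW d s v Λ).toReal := by
    rw [← ENNReal.toReal_add hMbw hmbw, ← ENNReal.toReal_add hubw hvbw]
    exact ENNReal.toReal_mono hsum_bw hbwle
  -- integrability of the potential and field terms
  have hΛfin : volume Λ < ⊤ := hΛb.measure_lt_top
  haveI : Fact (volume Λ < ⊤) := ⟨hΛfin⟩
  have hintble : ∀ (f : Rd d → ℝ) (C : ℝ), Measurable f → (∀ x, |f x| ≤ C) →
      Integrable f (volume.restrict Λ) := by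
    intro f C hf hC
    exact (integrable_const C).mono' hf.aestronglyMeasurable
      (Filter.Eventually.of_forall (fun x => by simpa [Real.norm_eq_abs] using hC x))
  set R : ℝ := max Mu Mv with hR
  have hMuR : Mu ≤ R := le_max_left _ _
  have hMvR : Mv ≤ R := le_max_right _ _
  have huR : ∀ x, |u x| ≤ R := fun x => (hub x).trans hMuR
  have hvR : ∀ x, |v x| ≤ R := fun x => (hvb x).trans hMvR
  have hMR : ∀ x, |M x| ≤ R := by
    intro x
    simp only [hM, abs_le] at *
    constructor
    · exact le_max_of_le_left (huR x).1
    · exact max_le (huR x).2 (hvR x).2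
  have hmR : ∀ x, |m x| ≤ R := by
    intro x
    simp only [hm, abs_le] at *
    constructor
    · exact le_min (huR x).1 (hvR x).1
    · exact min_le_of_left_le (huR x).2
  obtain ⟨CW, hCW⟩ : ∃ C, ∀ t ∈ Set.Icc (-R) R, ‖W t‖ ≤ C :=
    (isCompact_Icc).exists_bound_of_continuousOn hWc.continuousOn
  have hWb : ∀ (f : Rd d → ℝ), (∀ x, |f x| ≤ R) → ∀ x, |W (f x)| ≤ CW := by
    intro f hf x
    have := hCW (f x) (abs_le.mp (hf x))
    simpa [Real.norm_eq_abs] using this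
  have hWint : ∀ (f : Rd d → ℝ), Measurable f → (∀ x, |f x| ≤ R) →
      Integrable (fun x => W (f x)) (volume.restrict Λ) := fun f hf hfR =>
    hintble _ CW (hWc.measurable.comp hf) (hWb f hfR)
  have hgint : ∀ (f : Rd d → ℝ), Measurable f → (∀ x, |f x| ≤ R) →
      Integrable (fun x => g₁ x * f x) (volume.restrict Λ) := by
    intro f hf hfR
    refine hintble _ (Mg * R) (hg.mul hf) (fun x => ?_)
    rw [abs_mul]
    exact mul_le_mul (hgb x) (hfR x) (abs_nonneg _) ((abs_nonneg _).trans (hgb x))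
  -- equality of potential terms
  have hWeq : (∫ x in Λ, W (M x)) + (∫ x in Λ, W (m x)) =
      (∫ x in Λ, W (u x)) + (∫ x in Λ, W (v x)) := by
    rw [← integral_add (hWint M (hu.max hv) hMR) (hWint m (hu.min hv) hmR),
        ← integral_add (hWint u hu huR) (hWint v hv hvR)]
    apply integral_congr_ae
    apply Filter.Eventually.of_forall
    intro x
    simp only [hM, hm]
    rcases le_total (u x) (v x) with h | h <;>
      simp [max_eq_right, max_eq_left, min_eq_left, min_eq_right, h] <;> ring
  -- equality of field terms
  have hgeq : (∫ x in Λ, g₁ x * M x) + (∫ x in Λ, g₁ x * m x) =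
      (∫ x in Λ, g₁ x * u x) + (∫ x in Λ, g₁ x * v x) := by
    rw [← integral_add (hgint M (hu.max hv) hMR) (hgint m (hu.min hv) hmR),
        ← integral_add (hgint u hu huR) (hgint v hv hvR)]
    apply integral_congr_ae
    apply Filter.Eventually.of_forall
    intro x
    simp only [hM, hm]
    rcases le_total (u x) (v x) with h | h <;>
      simp [max_eq_right, max_eq_left, min_eq_left, min_eq_right, h] <;> ring
  -- conclude
  rw [G1e_eq_coe d s W θ g₁ M Λ hMg hMbw, G1e_eq_coe d s W θ g₁ m Λ hmg hmbw,
      G1e_eq_coe d s W θ g₁ u Λ hug hubw, G1e_eq_coe d s W θ g₁ v Λ hvg hvbw]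
  norm_cast
  nlinarith [mul_le_mul_of_nonneg_left (le_of_eq hgeq) hθ]

end
end

section
/- Let Λ ⊂ ℝ^d be a bounded open set containing Q(0) = [−1/2, 1/2]^d, let h > 0, θ > 0, and let g₁' = g₁ − h·1_{Q(0)}. Let v₀ be a bounded measurable function, let u be a v₀-minimizer of G₁ in Λ for the field g₁, and let u' be a v₀-minimizer of G₁ in Λ for the field g₁'. Then θ h ∫_{Q(0)} u'(x) dx ≤ G₁^{v₀}(u', Λ; g₁') − G₁^{v₀}(u, Λ; g₁) ≤ θ h ∫_{Q(0)} u(x) dx. In particular ∫_{Q(0)} u'(x) dx ≤ ∫_{Q(0)} u(x) dx, i.e. the average of the minimizer over Q(0) is nondecreasing in the field value on Q(0). -/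
open MeasureTheory Set Filter Topology
open scoped ENNReal Topology NNReal

noncomputable section

-- ===== auxiliary lemmas =====

lemma K1e_eq_coe (d : ℕ) (s : ℝ) (W : ℝ → ℝ) (θ : ℝ) (g v : Rd d → ℝ) (Λ : Set (Rd d))
    (hg : gag d s v Λ ≠ ⊤) :
    K1e d s W θ g v Λ = ((K1r d s W θ g v Λ : ℝ) : EReal) := by
  have h1 : (((gag d s v Λ).toReal : ℝ) : EReal) = ((gag d s v Λ : ℝ≥0∞) : EReal) := by
    rw [← EReal.toReal_coe_ennreal]
    exact EReal.coe_toReal (by simpa [EReal.coe_ennreal_eq_top_iff] using hg)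
      (EReal.coe_ennreal_ne_bot _)
  rw [K1e, K1r, EReal.coe_sub, EReal.coe_add, h1]

lemma fin_parts (d : ℕ) (s : ℝ) (W : ℝ → ℝ) (θ : ℝ) (g v₀ v : Rd d → ℝ) (Λ : Set (Rd d))
    (hne : G1bce d s W θ g v₀ v Λ ≠ ⊤) :
    gag d s v Λ ≠ ⊤ ∧ interW d s v Λ v₀ Λᶜ ≠ ⊤ := by
  have h1 : gag d s v Λ ≠ ⊤ := by
    intro hgt
    apply hne
    rw [G1bce, K1e, hgt, EReal.coe_ennreal_top, EReal.top_add_coe, EReal.top_sub_coe,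
      EReal.top_add_of_ne_bot (EReal.coe_ennreal_ne_bot _)]
  refine ⟨h1, ?_⟩
  intro hit
  apply hne
  rw [G1bce, K1e_eq_coe d s W θ g v Λ h1, hit, EReal.coe_ennreal_top, EReal.coe_add_top]

lemma G1bce_eq_coe (d : ℕ) (s : ℝ) (W : ℝ → ℝ) (θ : ℝ) (g v₀ v : Rd d → ℝ) (Λ : Set (Rd d))
    (hg : gag d s v Λ ≠ ⊤) (hi : interW d s v Λ v₀ Λᶜ ≠ ⊤) :
    G1bce d s W θ g v₀ v Λ = ((G1bcr d s W θ g v₀ v Λ : ℝ) : EReal) := by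
  have h1 : (((interW d s v Λ v₀ Λᶜ).toReal : ℝ) : EReal)
      = ((interW d s v Λ v₀ Λᶜ : ℝ≥0∞) : EReal) := by
    rw [← EReal.toReal_coe_ennreal]
    exact EReal.coe_toReal (by simpa [EReal.coe_ennreal_eq_top_iff] using hi)
      (EReal.coe_ennreal_ne_bot _)
  rw [G1bce, G1bcr, K1e_eq_coe d s W θ g v Λ hg, EReal.coe_add, h1]

lemma integrableOn_of_interW (d : ℕ) (hd : 1 ≤ d) (s : ℝ) (hs0 : 0 < s)
    (v v₀ : Rd d → ℝ) (hv : Measurable v) (Λ : Set (Rd d)) (hΛo : IsOpen Λ)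
    (R : ℝ) (hR : 0 < R) (hΛR : Λ ⊆ Metric.closedBall 0 R)
    (M : ℝ) (hv₀b : ∀ x, |v₀ x| ≤ M)
    (hi : interW d s v Λ v₀ Λᶜ ≠ ⊤) : IntegrableOn v Λ := by
  set e : ℝ := (d : ℝ) + 2 * s with he
  have he0 : 0 ≤ e := by positivity
  set C : ℝ := (4 * R) ^ e with hCdef
  have hC : 0 < C := Real.rpow_pos_of_pos (by linarith) e
  set A : Set (Rd d) := Metric.closedBall 0 (3 * R) \ Metric.ball 0 (2 * R) with hA
  have hAm : MeasurableSet A :=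
    (measurableSet_closedBall).diff measurableSet_ball
  have hAΛ : A ⊆ Λᶜ := by
    intro y hy hyΛ
    have h1 := hΛR hyΛ
    rw [Metric.mem_closedBall, dist_zero_right] at h1
    have h2 : y ∉ Metric.ball (0 : Rd d) (2 * R) := hy.2
    rw [Metric.mem_ball, dist_zero_right, not_lt] at h2
    linarith
  have hA0 : volume A ≠ 0 := by
    set p : Rd d := EuclideanSpace.single (⟨0, hd⟩ : Fin d) ((5 / 2) * R) with hp
    have hpn : ‖p‖ = (5 / 2) * R := by
      rw [hp, EuclideanSpace.norm_single, Real.norm_eq_abs, abs_of_pos (by linarith)]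
    have hball : Metric.ball p (R / 2) ⊆ A := by
      intro y hy
      rw [Metric.mem_ball] at hy
      have hyp : ‖y - p‖ < R / 2 := by rwa [← dist_eq_norm]
      have h1 : ‖y‖ ≤ ‖p‖ + ‖y - p‖ := by
        have := norm_add_le (y - p) p; simpa [add_comm] using this
      have h2 : ‖p‖ - ‖y - p‖ ≤ ‖y‖ := by
        have := norm_sub_norm_le p y
        have h3 : ‖p - y‖ = ‖y - p‖ := norm_sub_rev p y
        linarith
      constructor
      · rw [Metric.mem_closedBall, dist_zero_right]; linarith [hpn ▸ h1]
      · rw [Metric.mem_ball, dist_zero_right, not_lt]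
        · exact le_trans (by rw [hpn] at h2 ⊢; linarith) h2
    intro h0
    have := Metric.measure_ball_pos (volume : Measure (Rd d)) p (half_pos hR)
    exact this.ne' (measure_mono_null hball h0)
  have inner_bd : ∀ x ∈ Λ,
      volume A * ENNReal.ofReal ((v x ^ 2 / 2 - M ^ 2) / C) ≤
        ∫⁻ y in Λᶜ, ENNReal.ofReal ((v x - v₀ y) ^ 2 / ‖x - y‖ ^ e) := by
    intro x hx
    have hxR : ‖x‖ ≤ R := by
      have := hΛR hx; rwa [Metric.mem_closedBall, dist_zero_right] at this
    calc volume A * ENNReal.ofReal ((v x ^ 2 / 2 - M ^ 2) / C)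
        = ∫⁻ _ in A, ENNReal.ofReal ((v x ^ 2 / 2 - M ^ 2) / C) := by
          rw [setLIntegral_const, mul_comm]
      _ ≤ ∫⁻ y in A, ENNReal.ofReal ((v x - v₀ y) ^ 2 / ‖x - y‖ ^ e) := by
          refine lintegral_mono_ae (ae_restrict_of_forall_mem hAm fun y hy => ?_)
          have hy1 : ‖y‖ ≤ 3 * R := by
            have := hy.1; rwa [Metric.mem_closedBall, dist_zero_right] at this
          have hy2 : 2 * R ≤ ‖y‖ := by
            have := hy.2; rwa [Metric.mem_ball, dist_zero_right, not_lt] at this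
          have hxy1 : R ≤ ‖x - y‖ := by
            have h3 : ‖y‖ - ‖x‖ ≤ ‖y - x‖ := norm_sub_norm_le y x
            have h4 : ‖y - x‖ = ‖x - y‖ := norm_sub_rev y x
            linarith
          have hxy2 : ‖x - y‖ ≤ 4 * R := le_trans (norm_sub_le x y) (by linarith)
          have hp1 : 0 < ‖x - y‖ ^ e := Real.rpow_pos_of_pos (by linarith) e
          have hp2 : ‖x - y‖ ^ e ≤ C := Real.rpow_le_rpow (by linarith) hxy2 he0
          apply ENNReal.ofReal_le_ofReal
          rcases le_or_gt (v x ^ 2 / 2 - M ^ 2) 0 with h0 | h0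
          · exact le_trans (div_nonpos_of_nonpos_of_nonneg h0 hC.le) (by positivity)
          · have h1 : v x ^ 2 / 2 - M ^ 2 ≤ (v x - v₀ y) ^ 2 := by
              nlinarith [sq_nonneg (v x - 2 * v₀ y), abs_le.1 (hv₀b y), sq_nonneg (v₀ y)]
            exact div_le_div₀ (sq_nonneg _) h1 hp1 hp2
      _ ≤ ∫⁻ y in Λᶜ, ENNReal.ofReal ((v x - v₀ y) ^ 2 / ‖x - y‖ ^ e) :=
          lintegral_mono_set hAΛ
  have hmeasJ : Measurable fun x => ENNReal.ofReal ((v x ^ 2 / 2 - M ^ 2) / C) := by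
    apply Measurable.ennreal_ofReal
    fun_prop
  set J : ℝ≥0∞ := ∫⁻ x in Λ, ENNReal.ofReal ((v x ^ 2 / 2 - M ^ 2) / C) with hJ
  have hJfin : J ≠ ⊤ := by
    intro htop
    apply hi
    rw [interW]
    have h1 : volume A * J ≤
        ∫⁻ x in Λ, ∫⁻ y in Λᶜ, ENNReal.ofReal ((v x - v₀ y) ^ 2 / ‖x - y‖ ^ e) := by
      rw [hJ, ← lintegral_const_mul _ hmeasJ]
      exact lintegral_mono_ae (ae_restrict_of_forall_mem hΛo.measurableSet inner_bd)
    rw [htop, ENNReal.mul_top hA0] at h1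
    rw [top_le_iff.1 h1, ENNReal.mul_top (by norm_num)]
  have hΛfin : volume Λ ≠ ⊤ :=
    ((measure_mono hΛR).trans_lt measure_closedBall_lt_top).ne
  have hpt : ∀ x : Rd d, ENNReal.ofReal ‖v x‖ ≤
      ENNReal.ofReal C * ENNReal.ofReal ((v x ^ 2 / 2 - M ^ 2) / C)
        + ENNReal.ofReal (M ^ 2 + 1 / 2) := by
    intro x
    rw [Real.norm_eq_abs]
    rw [← ENNReal.ofReal_mul hC.le]
    rcases le_total (v x ^ 2 / 2 - M ^ 2) 0 with h0 | h0
    · calc ENNReal.ofReal |v x| ≤ ENNReal.ofReal (M ^ 2 + 1 / 2) := by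
            apply ENNReal.ofReal_le_ofReal
            nlinarith [sq_nonneg (|v x| - 1), sq_abs (v x), abs_nonneg (v x)]
        _ ≤ _ := le_add_self
    · refine le_trans (ENNReal.ofReal_le_ofReal ?_) ENNReal.ofReal_add_le
      rw [mul_div_cancel₀ _ hC.ne']
      nlinarith [sq_nonneg (|v x| - 1), sq_abs (v x)]
  refine ⟨hv.aestronglyMeasurable, ?_⟩
  rw [hasFiniteIntegral_iff_norm]
  calc ∫⁻ x in Λ, ENNReal.ofReal ‖v x‖
      ≤ ∫⁻ x in Λ, (ENNReal.ofReal C * ENNReal.ofReal ((v x ^ 2 / 2 - M ^ 2) / C)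
          + ENNReal.ofReal (M ^ 2 + 1 / 2)) := lintegral_mono hpt
    _ = ENNReal.ofReal C * J + ENNReal.ofReal (M ^ 2 + 1 / 2) * volume Λ := by
        rw [lintegral_add_right _ measurable_const, lintegral_const_mul _ hmeasJ,
          setLIntegral_const]
    _ < ⊤ := by
        apply ENNReal.add_lt_top.2
        exact ⟨ENNReal.mul_lt_top ENNReal.ofReal_lt_top (lt_top_iff_ne_top.2 hJfin),
          ENNReal.mul_lt_top ENNReal.ofReal_lt_top (lt_top_iff_ne_top.2 hΛfin)⟩

lemma Q0_measurable (d : ℕ) : MeasurableSet (Q0 d) := by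
  have : Q0 d = ⋂ i, (fun x : Rd d => x i) ⁻¹' (Set.Icc (-(1/2) : ℝ) (1/2)) := by
    ext x; simp [Q0]
  rw [this]
  exact MeasurableSet.iInter fun i =>
    (isClosed_Icc.preimage (by fun_prop : Continuous fun x : Rd d => x i)).measurableSet

lemma int_id (d : ℕ) (h : ℝ) (g v : Rd d → ℝ) (Λ : Set (Rd d))
    (hgm : Measurable g) (Mg : ℝ) (hgb : ∀ x, |g x| ≤ Mg)
    (hQΛ : Q0 d ⊆ Λ) (hvi : IntegrableOn v Λ) :
    ∫ x in Λ, (g x - (Q0 d).indicator (fun _ => h) x) * v x =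
      (∫ x in Λ, g x * v x) - h * ∫ x in Q0 d, v x := by
  have h1 : IntegrableOn (fun x => g x * v x) Λ :=
    hvi.bdd_mul (hgm.aestronglyMeasurable.restrict)
      (ae_of_all _ fun x => by rw [Real.norm_eq_abs]; exact hgb x)
  have h2 : IntegrableOn (fun x => (Q0 d).indicator (fun _ => h) x * v x) Λ :=
    hvi.bdd_mul ((measurable_const.indicator (Q0_measurable d)).aestronglyMeasurable.restrict)
      (ae_of_all _ fun x => norm_indicator_le_norm_self _ x)
  have h3 : (fun x => (g x - (Q0 d).indicator (fun _ => h) x) * v x) =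
      fun x => g x * v x - (Q0 d).indicator (fun _ => h) x * v x := by
    funext x; ring
  rw [h3, integral_sub h1 h2]
  congr 1
  have h4 : (fun x => (Q0 d).indicator (fun _ => h) x * v x) =
      (Q0 d).indicator (fun x => h * v x) := by
    funext x
    by_cases hx : x ∈ Q0 d <;> simp [Set.indicator, hx]
  rw [h4, setIntegral_indicator (Q0_measurable d), Set.inter_eq_right.mpr hQΛ,
    integral_const_mul]


/-- monotonicity of the minimal energy and of the average of minimizers
with respect to the field value on the unit cube `Q(0)`. -/
theorem statement15 (d : ℕ) (hd : 1 ≤ d) (s : ℝ) (hs : 0 < s ∧ s < 1)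
    (W : ℝ → ℝ) (C₀ δ₀ : ℝ) (hW : H1 W C₀ δ₀)
    (θ : ℝ) (hθ : 0 < θ) (h : ℝ) (hh : 0 < h)
    (g₁ : Rd d → ℝ) (hg : Measurable g₁) (Mg : ℝ) (hgb : ∀ x, |g₁ x| ≤ Mg)
    (Λ : Set (Rd d)) (hΛo : IsOpen Λ) (hΛb : Bornology.IsBounded Λ) (hQΛ : Q0 d ⊆ Λ)
    (v₀ : Rd d → ℝ) (hv₀ : Measurable v₀) (Mv₀ : ℝ) (hv₀b : ∀ x, |v₀ x| ≤ Mv₀)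
    (u u' : Rd d → ℝ)
    (hu : IsBCMin d s W θ g₁ v₀ u Λ)
    (hu' : IsBCMin d s W θ (fun x => g₁ x - (Q0 d).indicator (fun _ => h) x) v₀ u' Λ) :
    (θ * h * ∫ x in Q0 d, u' x ≤
      G1bcr d s W θ (fun x => g₁ x - (Q0 d).indicator (fun _ => h) x) v₀ u' Λ -
        G1bcr d s W θ g₁ v₀ u Λ) ∧
    (G1bcr d s W θ (fun x => g₁ x - (Q0 d).indicator (fun _ => h) x) v₀ u' Λ -
        G1bcr d s W θ g₁ v₀ u Λ ≤ θ * h * ∫ x in Q0 d, u x) ∧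
    (∫ x in Q0 d, u' x) ≤ ∫ x in Q0 d, u x := by
  obtain ⟨hum, hue, hufin, humin⟩ := hu
  obtain ⟨hu'm, hu'e, hu'fin, hu'min⟩ := hu'
  set g' : Rd d → ℝ := fun x => g₁ x - (Q0 d).indicator (fun _ => h) x with hg'def
  obtain ⟨R0, hR0⟩ := hΛb.subset_closedBall 0
  have hRpos : (0:ℝ) < max R0 1 := lt_of_lt_of_le one_pos (le_max_right _ _)
  have hΛR : Λ ⊆ Metric.closedBall 0 (max R0 1) :=
    hR0.trans (Metric.closedBall_subset_closedBall (le_max_left _ _))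
  obtain ⟨hgu, hiu⟩ := fin_parts d s W θ g₁ v₀ u Λ hufin
  obtain ⟨hgu', hiu'⟩ := fin_parts d s W θ g' v₀ u' Λ hu'fin
  have hIu : IntegrableOn u Λ :=
    integrableOn_of_interW d hd s hs.1 u v₀ hum Λ hΛo _ hRpos hΛR Mv₀ hv₀b hiu
  have hIu' : IntegrableOn u' Λ :=
    integrableOn_of_interW d hd s hs.1 u' v₀ hu'm Λ hΛo _ hRpos hΛR Mv₀ hv₀b hiu'
  have hid : ∀ v : Rd d → ℝ, IntegrableOn v Λ →
      G1bcr d s W θ g' v₀ v Λ = G1bcr d s W θ g₁ v₀ v Λ + θ * h * ∫ x in Q0 d, v x := by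
    intro v hvint
    rw [G1bcr, G1bcr, K1r, K1r, hg'def]
    rw [int_id d h g₁ v Λ hg Mg hgb hQΛ hvint]
    ring
  have hmin1 : G1bcr d s W θ g₁ v₀ u Λ ≤ G1bcr d s W θ g₁ v₀ u' Λ := by
    have := humin u' hu'm hu'e
    rw [G1bce_eq_coe d s W θ g₁ v₀ u Λ hgu hiu,
      G1bce_eq_coe d s W θ g₁ v₀ u' Λ hgu' hiu'] at this
    exact EReal.coe_le_coe_iff.1 this
  have hmin2 : G1bcr d s W θ g' v₀ u' Λ ≤ G1bcr d s W θ g' v₀ u Λ := by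
    have := hu'min u hum hue
    rw [G1bce_eq_coe d s W θ g' v₀ u' Λ hgu' hiu',
      G1bce_eq_coe d s W θ g' v₀ u Λ hgu hiu] at this
    exact EReal.coe_le_coe_iff.1 this
  have e1 := hid u hIu
  have e2 := hid u' hIu'
  have key1 : θ * h * ∫ x in Q0 d, u' x ≤
      G1bcr d s W θ g' v₀ u' Λ - G1bcr d s W θ g₁ v₀ u Λ := by
    rw [e2]; linarith
  have key2 : G1bcr d s W θ g' v₀ u' Λ - G1bcr d s W θ g₁ v₀ u Λ ≤
      θ * h * ∫ x in Q0 d, u x := by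
    rw [e1] at hmin2; linarith
  refine ⟨key1, key2, ?_⟩
  have hle : θ * h * ∫ x in Q0 d, u' x ≤ θ * h * ∫ x in Q0 d, u x :=
    le_trans key1 key2
  exact le_of_mul_le_mul_left hle (mul_pos hθ hh)

end
end
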